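/- arXiv:2004.05237 — 2 statements merged into one kernel-verified Lean document; each statement's English description precedes it below -/
import Mathlib

section
/- Let α = Σᵢ aᵢ δ_{xᵢ} be a discrete probability measure on ℝ^d and let A be a symmetric positive definite d×d matrix, with α_A = Σᵢ aᵢ δ_{A xᵢ}. Then the transport plan P = diag(a) (sending mass aᵢ from A xᵢ to xᵢ) is optimal for the quadratic cost, so W₂²(α_A, α) = Σᵢ aᵢ |A xᵢ − xᵢ|². -/
/-!
The diagonal plan is certified optimal by Kantorovich potentials. Since `A` is symmetric
positive semidefinite, `2 ⟪A u, v⟫ ≤ ⟪A u, u⟫ + ⟪A v, v⟫` (this is the monotonicity of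
`∇(½ ⟪A x, x⟫) = A x`), so with `f u = ‖A u‖² - ⟪A u, u⟫` and `g v = ‖v‖² - ⟪A v, v⟫` we get
`f u + g v ≤ ‖A u - v‖²`, with equality for `u = v`. Integrating against any plan with
marginals `a, a` bounds its cost below by `Σ aᵢ (f xᵢ + g xᵢ)`, the cost of the diagonal plan.
-/

open Finset
open scoped InnerProductSpace

section Transport

variable {ι κ : Type*} [Fintype ι] [Fintype κ]

def transportCosts (a : ι → ℝ) (b : κ → ℝ) (c : ι → κ → ℝ) : Set ℝ :=
  {s | ∃ P : ι → κ → ℝ, (∀ i j, 0 ≤ P i j) ∧ (∀ i, ∑ j, P i j = a i) ∧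
    (∀ j, ∑ i, P i j = b j) ∧ s = ∑ i, ∑ j, P i j * c i j}

theorem sum_add_sum_le_of_mem_transportCosts {a : ι → ℝ} {b : κ → ℝ} {c : ι → κ → ℝ}
    {f : ι → ℝ} {g : κ → ℝ} (hfg : ∀ i j, f i + g j ≤ c i j) {s : ℝ}
    (hs : s ∈ transportCosts a b c) :
    ∑ i, a i * f i + ∑ j, b j * g j ≤ s := by
  obtain ⟨P, hP, hrow, hcol, rfl⟩ := hs
  calc ∑ i, a i * f i + ∑ j, b j * g j
      = ∑ i, ∑ j, P i j * f i + ∑ j, ∑ i, P i j * g j := by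
        simp only [← sum_mul, hrow, hcol]
    _ = ∑ i, ∑ j, P i j * (f i + g j) := by
        rw [sum_comm (f := fun j i => P i j * g j), ← sum_add_distrib]
        simp only [mul_add, sum_add_distrib]
    _ ≤ ∑ i, ∑ j, P i j * c i j :=
        sum_le_sum fun i _ => sum_le_sum fun j _ => mul_le_mul_of_nonneg_left (hfg i j) (hP i j)

theorem diag_mem_transportCosts [DecidableEq ι] {a : ι → ℝ} (ha : ∀ i, 0 ≤ a i)
    (c : ι → ι → ℝ) : ∑ i, a i * c i i ∈ transportCosts a a c := by
  refine ⟨fun i j => if i = j then a i else 0, fun i j => ?_, fun i => ?_, fun j => ?_, ?_⟩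
  · dsimp only
    split_ifs
    exacts [ha i, le_rfl]
  · simp
  · simp
  · simp [ite_mul]

theorem isLeast_transportCosts_diag [DecidableEq ι] {a : ι → ℝ} (ha : ∀ i, 0 ≤ a i)
    {c : ι → ι → ℝ} (f g : ι → ℝ) (hfg : ∀ i j, f i + g j ≤ c i j)
    (hdiag : ∀ i, f i + g i = c i i) :
    IsLeast (transportCosts a a c) (∑ i, a i * c i i) := by
  refine ⟨diag_mem_transportCosts ha c, fun s hs => ?_⟩
  calc ∑ i, a i * c i i = ∑ i, a i * f i + ∑ i, a i * g i := by
        simp only [← hdiag, mul_add, sum_add_distrib]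
    _ ≤ s := sum_add_sum_le_of_mem_transportCosts hfg hs

end Transport

namespace LinearMap.IsPositive

variable {E : Type*} [NormedAddCommGroup E] [InnerProductSpace ℝ E] {A : E →ₗ[ℝ] E}

theorem two_mul_inner_le (hA : A.IsPositive) (u v : E) :
    2 * ⟪A u, v⟫_ℝ ≤ ⟪A u, u⟫_ℝ + ⟪A v, v⟫_ℝ := by
  have h := hA.inner_nonneg_left (u - v)
  have hsymm : ⟪A v, u⟫_ℝ = ⟪A u, v⟫_ℝ := by rw [hA.isSymmetric, real_inner_comm]
  simp only [map_sub, inner_sub_left, inner_sub_right] at h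
  linarith

theorem add_le_norm_sub_sq (hA : A.IsPositive) (u v : E) :
    ‖A u‖ ^ 2 - ⟪A u, u⟫_ℝ + (‖v‖ ^ 2 - ⟪A v, v⟫_ℝ) ≤ ‖A u - v‖ ^ 2 := by
  rw [norm_sub_sq_real]
  linarith [hA.two_mul_inner_le u v]

end LinearMap.IsPositive

theorem dilation_diag_plan_optimal_general (d n : ℕ)
    (a : Fin n → ℝ) (ha : ∀ i, 0 < a i)
    (x : Fin n → EuclideanSpace ℝ (Fin d))
    (A : EuclideanSpace ℝ (Fin d) →ₗ[ℝ] EuclideanSpace ℝ (Fin d))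
    (hAsym : ∀ u v, (inner ℝ (A u) v : ℝ) = (inner ℝ u (A v) : ℝ))
    (hApos : ∀ u, u ≠ 0 → 0 < (inner ℝ (A u) u : ℝ)) :
    IsLeast {c : ℝ | ∃ P : Fin n → Fin n → ℝ,
        (∀ i j, 0 ≤ P i j) ∧
        (∀ i, ∑ j, P i j = a i) ∧
        (∀ j, ∑ i, P i j = a j) ∧
        c = ∑ i, ∑ j, P i j * ‖A (x i) - x j‖ ^ 2}
      (∑ i, a i * ‖A (x i) - x i‖ ^ 2) := by
  have hA : A.IsPositive := by
    refine (A.isPositive_iff).mpr ⟨hAsym, fun u => ?_⟩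
    rcases eq_or_ne u 0 with rfl | hu
    · simp
    · exact (hApos u hu).le
  refine isLeast_transportCosts_diag (fun i => (ha i).le)
    (c := fun i j => ‖A (x i) - x j‖ ^ 2)
    (fun i => ‖A (x i)‖ ^ 2 - ⟪A (x i), x i⟫_ℝ) (fun j => ‖x j‖ ^ 2 - ⟪A (x j), x j⟫_ℝ)
    (fun i j => hA.add_le_norm_sub_sq (x i) (x j)) fun i => ?_
  simp only [norm_sub_sq_real]
  ring

/-- For a discrete probability measure `α = Σᵢ aᵢ δ_{xᵢ}` on `ℝ^d` and a symmetric
positive definite linear map `A`, the plan `P = diag(a)` (sending mass `aᵢ` from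
`A xᵢ` to `xᵢ`) is optimal for the quadratic cost, so
`W₂²(α_A, α) = Σᵢ aᵢ |A xᵢ − xᵢ|²`. Optimality is expressed as `IsLeast`:
the value `Σᵢ aᵢ |A xᵢ − xᵢ|²` is attained by a feasible plan and is a lower
bound of the values of all feasible plans. -/
theorem dilation_diag_plan_optimal (d n : ℕ)
    (a : Fin n → ℝ) (ha : ∀ i, 0 < a i) (hsum : ∑ i, a i = 1)
    (x : Fin n → EuclideanSpace ℝ (Fin d))
    (A : EuclideanSpace ℝ (Fin d) →ₗ[ℝ] EuclideanSpace ℝ (Fin d))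
    (hAsym : ∀ u v, (inner ℝ (A u) v : ℝ) = (inner ℝ u (A v) : ℝ))
    (hApos : ∀ u, u ≠ 0 → 0 < (inner ℝ (A u) u : ℝ)) :
    IsLeast {c : ℝ | ∃ P : Fin n → Fin n → ℝ,
        (∀ i j, 0 ≤ P i j) ∧
        (∀ i, ∑ j, P i j = a i) ∧
        (∀ j, ∑ i, P i j = a j) ∧
        c = ∑ i, ∑ j, P i j * ‖A (x i) - x j‖ ^ 2}
      (∑ i, a i * ‖A (x i) - x i‖ ^ 2) :=
  dilation_diag_plan_optimal_general d n a ha x A hAsym hApos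
end

section
/- Let α, β be discrete probability measures, η a direction, and define the objective J(s) = W₂²(α̂_s, β̂) + (‖a‖₁ − ‖b‖₁)² where α_s is the shift of the positive discrete measure α by sη and hats denote normalization to probability measures. Then J is convex in s. -/
/-!
For a fixed coupling `P` with marginals `p`, `q`, expanding the square gives
`∑ P i j ‖x i + s η - y j‖² = ∑ P i j ‖x i - y j‖² + (∑ p) ‖η‖² s² + 2 s (∑ p i ⟪x i, η⟫ - ∑ q j ⟪y j, η⟫)`,
and the increment depends on `P` only through its marginals. Hence shifting by `s η` translates
the whole set of transport costs by the same quadratic in `s`, so its infimum `W₂²(α̂_s, β̂)` is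
`W₂²(α̂, β̂)` plus a quadratic with nonnegative leading coefficient. If there is no coupling at
all, every shifted set is empty and the junk value `sInf ∅ = 0` is constant in `s`.
-/

open Finset Set RealInnerProductSpace

theorem convexOn_quadratic {c : ℝ} (hc : 0 ≤ c) (b : ℝ) :
    ConvexOn ℝ univ fun s : ℝ => c * s ^ 2 + b * s :=
  ((Even.convexOn_pow even_two).smul hc).add ((LinearMap.mulLeft ℝ b).convexOn convex_univ)

variable {ι κ E : Type*} [Fintype ι] [Fintype κ] [NormedAddCommGroup E]

def couplingCosts (p : ι → ℝ) (q : κ → ℝ) (x : ι → E) (y : κ → E) : Set ℝ :=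
  {c | ∃ P : ι → κ → ℝ, (∀ i j, 0 ≤ P i j) ∧ (∀ i, ∑ j, P i j = p i) ∧
    (∀ j, ∑ i, P i j = q j) ∧ c = ∑ i, ∑ j, P i j * ‖x i - y j‖ ^ 2}

section CouplingCosts

variable {p : ι → ℝ} {q : κ → ℝ} {x : ι → E} {y : κ → E}

theorem couplingCosts_nonneg {c : ℝ} (hc : c ∈ couplingCosts p q x y) : 0 ≤ c := by
  obtain ⟨P, hP, -, -, rfl⟩ := hc
  exact sum_nonneg fun i _ => sum_nonneg fun j _ => mul_nonneg (hP i j) (sq_nonneg _)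

theorem sum_nonneg_of_couplingCosts_nonempty (h : (couplingCosts p q x y).Nonempty) :
    0 ≤ ∑ i, p i := by
  obtain ⟨_, P, hP, hp, -⟩ := h
  rw [← sum_congr rfl fun i _ => hp i]
  exact sum_nonneg fun i _ => sum_nonneg fun j _ => hP i j

end CouplingCosts

variable [InnerProductSpace ℝ E]

theorem norm_add_smul_sq (u η : E) (s : ℝ) :
    ‖u + s • η‖ ^ 2 = ‖u‖ ^ 2 + 2 * ⟪u, η⟫ * s + ‖η‖ ^ 2 * s ^ 2 := by
  rw [norm_add_sq_real, real_inner_smul_right, norm_smul, Real.norm_eq_abs, mul_pow, sq_abs]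
  ring

def shiftCost (p : ι → ℝ) (q : κ → ℝ) (x : ι → E) (y : κ → E) (η : E) (s : ℝ) : ℝ :=
  (∑ i, p i) * ‖η‖ ^ 2 * s ^ 2 + 2 * (∑ i, p i * ⟪x i, η⟫ - ∑ j, q j * ⟪y j, η⟫) * s

section Marginals

variable {P : ι → κ → ℝ} {p : ι → ℝ} {q : κ → ℝ}

theorem sum_sum_mul_sub_of_marginals (hp : ∀ i, ∑ j, P i j = p i) (hq : ∀ j, ∑ i, P i j = q j)
    (f : ι → ℝ) (g : κ → ℝ) :
    ∑ i, ∑ j, P i j * (f i - g j) = ∑ i, p i * f i - ∑ j, q j * g j := by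
  simp only [mul_sub, sum_sub_distrib, ← sum_mul, hp]
  rw [sum_comm]
  simp only [← sum_mul, hq]

theorem sum_sum_mul_norm_add_smul_sub_sq (hp : ∀ i, ∑ j, P i j = p i)
    (hq : ∀ j, ∑ i, P i j = q j) (x : ι → E) (y : κ → E) (η : E) (s : ℝ) :
    ∑ i, ∑ j, P i j * ‖x i + s • η - y j‖ ^ 2
      = ∑ i, ∑ j, P i j * ‖x i - y j‖ ^ 2 + shiftCost p q x y η s := by
  have hmass : ∑ i, ∑ j, P i j = ∑ i, p i := sum_congr rfl fun i _ => hp i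
  have hcross := sum_sum_mul_sub_of_marginals hp hq (fun i => ⟪x i, η⟫) (fun j => ⟪y j, η⟫)
  calc ∑ i, ∑ j, P i j * ‖x i + s • η - y j‖ ^ 2
      = ∑ i, ∑ j, (P i j * ‖x i - y j‖ ^ 2 + ‖η‖ ^ 2 * s ^ 2 * P i j
          + 2 * s * (P i j * (⟪x i, η⟫ - ⟪y j, η⟫))) := by
        refine sum_congr rfl fun i _ => sum_congr rfl fun j _ => ?_
        rw [add_sub_right_comm, norm_add_smul_sq, inner_sub_left]
        ring
    _ = ∑ i, ∑ j, P i j * ‖x i - y j‖ ^ 2 + shiftCost p q x y η s := by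
        simp only [sum_add_distrib, ← mul_sum, hmass, hcross, shiftCost]
        ring

end Marginals

section Shift

variable {p : ι → ℝ} {q : κ → ℝ} {x : ι → E} {y : κ → E}

theorem couplingCosts_shift (η : E) (s : ℝ) :
    couplingCosts p q (fun i => x i + s • η) y
      = (· + shiftCost p q x y η s) '' couplingCosts p q x y := by
  ext c
  constructor
  · rintro ⟨P, hP, hp, hq, rfl⟩
    exact ⟨_, ⟨P, hP, hp, hq, rfl⟩, (sum_sum_mul_norm_add_smul_sub_sq hp hq x y η s).symm⟩
  · rintro ⟨_, ⟨P, hP, hp, hq, rfl⟩, rfl⟩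
    exact ⟨P, hP, hp, hq, (sum_sum_mul_norm_add_smul_sub_sq hp hq x y η s).symm⟩

theorem sInf_couplingCosts_shift (h : (couplingCosts p q x y).Nonempty) (η : E) (s : ℝ) :
    sInf (couplingCosts p q (fun i => x i + s • η) y)
      = sInf (couplingCosts p q x y) + shiftCost p q x y η s := by
  rw [couplingCosts_shift]
  exact ((OrderIso.addRight _).map_csInf' h ⟨0, fun _ => couplingCosts_nonneg⟩).symm

end Shift

theorem convexOn_sInf_couplingCosts_shift (p : ι → ℝ) (q : κ → ℝ) (x : ι → E) (y : κ → E)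
    (η : E) : ConvexOn ℝ univ fun s : ℝ => sInf (couplingCosts p q (fun i => x i + s • η) y) := by
  rcases (couplingCosts p q x y).eq_empty_or_nonempty with h | h
  · simp only [couplingCosts_shift, h, image_empty, Real.sInf_empty]
    exact convexOn_const 0 convex_univ
  · simp only [sInf_couplingCosts_shift h]
    exact (convexOn_const _ convex_univ).add (convexOn_quadratic
      (mul_nonneg (sum_nonneg_of_couplingCosts_nonempty h) (sq_nonneg ‖η‖)) _)

theorem mixed_objective_convex_in_shift_general (d n m : ℕ)
    (a : Fin n → ℝ) (b : Fin m → ℝ)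
    (x : Fin n → EuclideanSpace ℝ (Fin d)) (y : Fin m → EuclideanSpace ℝ (Fin d))
    (η : EuclideanSpace ℝ (Fin d)) :
    ConvexOn ℝ Set.univ (fun s : ℝ =>
      sInf {c : ℝ | ∃ P : Fin n → Fin m → ℝ,
        (∀ i j, 0 ≤ P i j) ∧
        (∀ i, ∑ j, P i j = a i / ∑ i', a i') ∧
        (∀ j, ∑ i, P i j = b j / ∑ j', b j') ∧
        c = ∑ i, ∑ j, P i j * ‖(x i + s • η) - y j‖ ^ 2}
      + ((∑ i, a i) - ∑ j, b j) ^ 2) :=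
  (convexOn_sInf_couplingCosts_shift _ _ x y η).add_const _

/-- For positive discrete measures `α = Σᵢ aᵢ δ_{xᵢ}` and `β = Σⱼ bⱼ δ_{yⱼ}` and a
direction `η`, the objective `J(s) = W₂²(α̂_s, β̂) + (‖a‖₁ − ‖b‖₁)²` is convex in
the shift size `s`, where hats denote normalization to probability measures and
`α_s` is the shift of `α` by `sη`. -/
theorem mixed_objective_convex_in_shift (d n m : ℕ)
    (a : Fin n → ℝ) (b : Fin m → ℝ)
    (ha : ∀ i, 0 < a i) (hb : ∀ j, 0 < b j)
    (x : Fin n → EuclideanSpace ℝ (Fin d)) (y : Fin m → EuclideanSpace ℝ (Fin d))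
    (η : EuclideanSpace ℝ (Fin d)) :
    ConvexOn ℝ Set.univ (fun s : ℝ =>
      sInf {c : ℝ | ∃ P : Fin n → Fin m → ℝ,
        (∀ i j, 0 ≤ P i j) ∧
        (∀ i, ∑ j, P i j = a i / ∑ i', a i') ∧
        (∀ j, ∑ i, P i j = b j / ∑ j', b j') ∧
        c = ∑ i, ∑ j, P i j * ‖(x i + s • η) - y j‖ ^ 2}
      + ((∑ i, a i) - ∑ j, b j) ^ 2) :=
  mixed_objective_convex_in_shift_general d n m a b x y η
end
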